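/- Let φ be a norm on ℝ², let E ⊆ ℝ² be a convex set, and let r > 0. Then the Wulff plaquette E^r = ⋃{ W_r(x) : W_r(x) ⊆ E } is convex, and E^r satisfies the rW_φ-condition. -/

import Mathlib

open MeasureTheory Set ENNReal Filter

noncomputable section

/-- `φ` is a norm on `ℝⁿ` (represented as `Fin n → ℝ`). -/
structure IsNorm {n : ℕ} (φ : (Fin n → ℝ) → ℝ) : Prop where
  nonneg : ∀ x, 0 ≤ φ x
  eq_zero_iff : ∀ x, φ x = 0 ↔ x = 0
  smul_eq : ∀ (a : ℝ) (x : Fin n → ℝ), φ (a • x) = |a| * φ x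
  add_le : ∀ x y, φ (x + y) ≤ φ x + φ y

/-- The divergence of a vector field `η : ℝⁿ → ℝⁿ`. -/
def diverg {n : ℕ} (η : (Fin n → ℝ) → (Fin n → ℝ)) (x : Fin n → ℝ) : ℝ :=
  ∑ i, fderiv ℝ η x (Pi.single i 1) i

/-- The anisotropic total variation `∫ φ*(Du)` of `u : ℝⁿ → ℝ`:
`sup { ∫ u div η dx : η ∈ C¹_c(ℝⁿ;ℝⁿ), φ(η(x)) ≤ 1 ∀ x }`, as an extended real. -/
def anisoTV {n : ℕ} (φ : (Fin n → ℝ) → ℝ) (u : (Fin n → ℝ) → ℝ) : ℝ≥0∞ :=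
  ⨆ η ∈ {η : (Fin n → ℝ) → (Fin n → ℝ) |
      ContDiff ℝ 1 η ∧ HasCompactSupport η ∧ ∀ x, φ (η x) ≤ 1},
    ENNReal.ofReal (∫ x, u x * diverg η x)

/-- `u ∈ BV(ℝⁿ)` (with respect to the anisotropic total variation). -/
def IsBV {n : ℕ} (φ : (Fin n → ℝ) → ℝ) (u : (Fin n → ℝ) → ℝ) : Prop :=
  Integrable u volume ∧ anisoTV φ u ≠ ⊤

/-- `u` is admissible for problem (1): `u ∈ BV(ℝⁿ)`, `u = 0` a.e. outside `Ω`,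
`u` is a.e. `ℕ`-valued, and `∫_Ω u = m`. -/
def Admissible {n : ℕ} (φ : (Fin n → ℝ) → ℝ) (Ω : Set (Fin n → ℝ)) (m : ℝ)
    (u : (Fin n → ℝ) → ℝ) : Prop :=
  IsBV φ u ∧ (∀ᵐ x ∂volume, x ∉ Ω → u x = 0) ∧
    (∀ᵐ x ∂volume, ∃ k : ℕ, u x = k) ∧ (∫ x in Ω, u x) = m

/-- `u` is a minimizer of problem (1). -/
def IsMinimizer {n : ℕ} (φ : (Fin n → ℝ) → ℝ) (Ω : Set (Fin n → ℝ)) (m : ℝ)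
    (u : (Fin n → ℝ) → ℝ) : Prop :=
  Admissible φ Ω m u ∧ ∀ v, Admissible φ Ω m v → anisoTV φ u ≤ anisoTV φ v

/-- The anisotropic perimeter `P_φ(E)` of a set `E ⊆ ℝⁿ`. -/
def anisoPerimeter {n : ℕ} (φ : (Fin n → ℝ) → ℝ) (E : Set (Fin n → ℝ)) : ℝ≥0∞ :=
  anisoTV φ (E.indicator (1 : (Fin n → ℝ) → ℝ))

/-- The Wulff ball `W_r(x) = {y : φ(y-x) < r}`. -/
def wulffBall {n : ℕ} (φ : (Fin n → ℝ) → ℝ) (x : Fin n → ℝ) (r : ℝ) : Set (Fin n → ℝ) :=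
  {y | φ (y - x) < r}

/-- `E` satisfies the `rW_φ`-condition. -/
def rWCond {n : ℕ} (φ : (Fin n → ℝ) → ℝ) (E : Set (Fin n → ℝ)) (r : ℝ) : Prop :=
  ∀ x ∈ frontier E, ∃ y, wulffBall φ y r ⊆ E ∧ x ∈ frontier (wulffBall φ y r)

/-- The Wulff plaquette `E^r`, the union of all Wulff balls of radius `r` contained
in `E` (with `E^0 = E`). -/
def plaquette {n : ℕ} (φ : (Fin n → ℝ) → ℝ) (E : Set (Fin n → ℝ)) (r : ℝ) :
    Set (Fin n → ℝ) :=
  if r = 0 then E else ⋃ (x) (_ : wulffBall φ x r ⊆ E), wulffBall φ x r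

/-- `R_Ω`: the maximal `R > 0` such that some Wulff ball of radius `R` is contained in `Ω`. -/
def maxInradius {n : ℕ} (φ : (Fin n → ℝ) → ℝ) (Ω : Set (Fin n → ℝ)) : ℝ :=
  sSup {R | 0 < R ∧ ∃ x, wulffBall φ x R ⊆ Ω}

/-- `r_Ω`: the maximal `r > 0` such that `Ω` satisfies the `rW_φ`-condition
(`0` if there is none, since `sSup ∅ = 0`). -/
def maxRollRadius {n : ℕ} (φ : (Fin n → ℝ) → ℝ) (Ω : Set (Fin n → ℝ)) : ℝ :=
  sSup {r | 0 < r ∧ rWCond φ Ω r}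

/-- The set of points of Lebesgue density `1` of `E`. -/
def densityPoints {n : ℕ} (E : Set (Fin n → ℝ)) : Set (Fin n → ℝ) :=
  {x | Tendsto (fun r : ℝ => volume (E ∩ Metric.ball x r) / volume (Metric.ball x r))
    (nhdsWithin 0 (Ioi 0)) (nhds 1)}

/-- `E` is a minimizer of problem (10): the constrained isoperimetric problem
minimizing `P_φ` among measurable subsets of `Ω` of prescribed measure `m`. -/
def IsIsopMinimizer {n : ℕ} (φ : (Fin n → ℝ) → ℝ) (Ω : Set (Fin n → ℝ)) (m : ℝ)
    (E : Set (Fin n → ℝ)) : Prop :=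
  MeasurableSet E ∧ E ⊆ Ω ∧ (volume E).toReal = m ∧
    ∀ F, MeasurableSet F → F ⊆ Ω → (volume F).toReal = m →
      anisoPerimeter φ E ≤ anisoPerimeter φ F

/-- The Euclidean norm on `ℝ²`. -/
def euclNorm (v : Fin 2 → ℝ) : ℝ := Real.sqrt (v 0 ^ 2 + v 1 ^ 2)

/-- The crystalline norm `φ(ν) = |ν₁| + |ν₂|` on `ℝ²`. -/
def crysNorm (v : Fin 2 → ℝ) : ℝ := |v 0| + |v 1|

/-- The open unit square `(0,1)² ⊆ ℝ²`. -/
def unitSquare : Set (Fin 2 → ℝ) := univ.pi fun _ => Ioo (0 : ℝ) 1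

/-- The closed unit square `[0,1]² ⊆ ℝ²`. -/
def closedUnitSquare : Set (Fin 2 → ℝ) := univ.pi fun _ => Icc (0 : ℝ) 1

/-- `j` is the essential supremum `‖u‖_∞` of `u`. -/
def IsEssSup (u : (Fin 2 → ℝ) → ℝ) (j : ℕ) : Prop :=
  (∀ᵐ x ∂volume, u x ≤ (j : ℝ)) ∧ ∀ c : ℝ, (∀ᵐ x ∂volume, u x ≤ c) → (j : ℝ) ≤ c

/-!
`E^r` is the Minkowski sum `S + W_r(0)`, where `S = {x | W_r(x) ⊆ E}` is the set of admissible
centres. A point `z` of `W_r(s x + t y)` is `s (x + d) + t (y + d)` with `φ d < r`, so `S` is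
convex when `E` is, and hence so is `E^r`.

For the `rW_φ`-condition, `S` is closed and `{φ ≤ r}` is compact (`φ` is a norm on a
finite-dimensional space), so `closure E^r ⊆ S + {φ ≤ r}`. A boundary point `x` of `E^r` thus has
a centre `y ∈ S` with `φ (x - y) ≤ r`, and equality holds because otherwise `x` would lie in the
open set `W_r(y) ⊆ E^r`; then `x` lies on the boundary of `W_r(y)`.
-/

open scoped Topology Pointwise

namespace Seminorm

variable {E : Type*}

lemma mem_frontier_ball [AddCommGroup E] [Module ℝ E] [TopologicalSpace E] [ContinuousAdd E]
    [ContinuousSMul ℝ E] {p : Seminorm ℝ E} {x y : E} {r : ℝ} (hr : 0 < r)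
    (hxy : p (x - y) = r) : x ∈ frontier (p.ball y r) := by
  set γ : ℝ → E := fun t => y + t • (x - y)
  have hγ : Tendsto γ (𝓝 1) (𝓝 x) := by
    simpa [γ] using ((by fun_prop : Continuous γ).tendsto 1)
  have hpγ : ∀ t, p (γ t - y) = |t| * r := fun t => by
    simp [γ, map_smul_eq_mul, hxy]
  refine ⟨mem_closure_of_tendsto (hγ.mono_left (nhdsWithin_le_nhds (s := Iio 1))) ?_,
    fun hint => ?_⟩
  · filter_upwards [Ioo_mem_nhdsLT zero_lt_one] with t ht
    rw [mem_ball, hpγ, abs_of_pos ht.1]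
    nlinarith [ht.2]
  · obtain ⟨t, hγt, ht⟩ := ((hγ.mono_left (nhdsWithin_le_nhds (s := Ioi 1))).eventually
      (mem_interior_iff_mem_nhds.mp hint)).and (self_mem_nhdsWithin (s := Ioi 1)) |>.exists
    have : p (γ t - y) < r := hγt
    rw [hpγ, abs_of_pos (zero_lt_one.trans ht)] at this
    nlinarith [(ht : 1 < t)]

variable [NormedAddCommGroup E] [NormedSpace ℝ E] [FiniteDimensional ℝ E]

protected lemma continuous_of_finiteDimensional (p : Seminorm ℝ E) : Continuous p :=
  (p.convexOn : ConvexOn ℝ Set.univ p).locallyLipschitz.continuous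

lemma exists_pos_mul_norm_le (p : Seminorm ℝ E) (hp : ∀ x, p x = 0 → x = 0) :
    ∃ m > 0, ∀ v, m * ‖v‖ ≤ p v := by
  rcases subsingleton_or_nontrivial E with hE | hE
  · exact ⟨1, one_pos, fun v => by simp [Subsingleton.elim v 0]⟩
  obtain ⟨u, hu, hmin⟩ := (isCompact_sphere (0 : E) 1).exists_isMinOn
    (NormedSpace.sphere_nonempty.mpr zero_le_one) p.continuous_of_finiteDimensional.continuousOn
  have hu0 : u ≠ 0 := ne_zero_of_mem_unit_sphere ⟨u, hu⟩
  refine ⟨p u, (apply_nonneg p u).lt_of_ne' (mt (hp u) hu0), fun v => ?_⟩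
  rcases eq_or_ne v 0 with rfl | hv
  · simp
  have hnv : 0 < ‖v‖ := norm_pos_iff.mpr hv
  have hv_sphere : ‖v‖⁻¹ • v ∈ Metric.sphere (0 : E) 1 := by simp [norm_smul, hnv.ne']
  calc p u * ‖v‖ ≤ p (‖v‖⁻¹ • v) * ‖v‖ := by gcongr; exact hmin hv_sphere
    _ = p v := by rw [map_smul_eq_mul, norm_inv, norm_norm]; field_simp

lemma isCompact_closedBall (p : Seminorm ℝ E) (hp : ∀ x, p x = 0 → x = 0) (x : E) (r : ℝ) :
    IsCompact (p.closedBall x r) := by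
  obtain ⟨m, hm, hpm⟩ := p.exists_pos_mul_norm_le hp
  refine Metric.isCompact_of_isClosed_isBounded
    (isClosed_le (p.continuous_of_finiteDimensional.comp (continuous_id.sub continuous_const))
      continuous_const) ((Metric.isBounded_closedBall (x := x) (r := r / m)).subset fun y hy => ?_)
  rw [Metric.mem_closedBall, dist_eq_norm, le_div_iff₀ hm, mul_comm]
  exact (hpm _).trans hy

end Seminorm

variable {n : ℕ} {φ : (Fin n → ℝ) → ℝ}

def IsNorm.toSeminorm (hφ : IsNorm φ) : Seminorm ℝ (Fin n → ℝ) :=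
  Seminorm.of φ hφ.add_le fun a x => by rw [hφ.smul_eq, Real.norm_eq_abs]

namespace IsNorm

lemma wulffBall_eq_ball (hφ : IsNorm φ) (x : Fin n → ℝ) (r : ℝ) :
    wulffBall φ x r = hφ.toSeminorm.ball x r :=
  rfl

protected lemma continuous (hφ : IsNorm φ) : Continuous φ :=
  hφ.toSeminorm.continuous_of_finiteDimensional

lemma isOpen_wulffBall (hφ : IsNorm φ) (x : Fin n → ℝ) (r : ℝ) : IsOpen (wulffBall φ x r) :=
  isOpen_lt (hφ.continuous.comp (continuous_id.sub continuous_const)) continuous_const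

lemma isCompact_setOf_le (hφ : IsNorm φ) (r : ℝ) : IsCompact {v | φ v ≤ r} := by
  have h := hφ.toSeminorm.isCompact_closedBall (fun x => (hφ.eq_zero_iff x).mp) 0 r
  rw [Seminorm.closedBall_zero_eq] at h
  exact h

end IsNorm

def wulffCenters (φ : (Fin n → ℝ) → ℝ) (E : Set (Fin n → ℝ)) (r : ℝ) : Set (Fin n → ℝ) :=
  {x | wulffBall φ x r ⊆ E}

variable {E : Set (Fin n → ℝ)} {r : ℝ}

lemma plaquette_eq_add (hr : r ≠ 0) :
    plaquette φ E r = wulffCenters φ E r + wulffBall φ 0 r := by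
  ext z
  simp only [plaquette, if_neg hr, mem_iUnion, Set.mem_add, wulffCenters, wulffBall, mem_ofPred,
    sub_zero, exists_prop]
  constructor
  · rintro ⟨x, hx, hz⟩
    exact ⟨x, hx, z - x, hz, add_sub_cancel x z⟩
  · rintro ⟨x, hx, v, hv, rfl⟩
    exact ⟨x, hx, by rwa [add_sub_cancel_left]⟩

lemma wulffBall_subset_plaquette (hr : r ≠ 0) {y : Fin n → ℝ} (hy : y ∈ wulffCenters φ E r) :
    wulffBall φ y r ⊆ plaquette φ E r := by
  rw [plaquette, if_neg hr]
  exact subset_biUnion_of_mem (u := fun x => wulffBall φ x r) hy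

lemma Convex.wulffCenters (hE : Convex ℝ E) : Convex ℝ (wulffCenters φ E r) := by
  intro x hx y hy s t hs ht hst z hz
  set d := z - (s • x + t • y)
  have hzd : z = s • (x + d) + t • (y + d) := by
    calc z = s • x + t • y + (s + t) • d := by rw [hst, one_smul, add_sub_cancel]
      _ = s • (x + d) + t • (y + d) := by module
  rw [hzd]
  exact hE (hx (by simpa [wulffBall] using hz)) (hy (by simpa [wulffBall] using hz)) hs ht hst

lemma isClosed_wulffCenters (hφ : Continuous φ) : IsClosed (wulffCenters φ E r) := by
  have : wulffCenters φ E r = ⋂ z ∈ Eᶜ, {x | r ≤ φ (z - x)} := by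
    ext x
    simp only [wulffCenters, wulffBall, subset_def, mem_ofPred, mem_iInter, mem_compl_iff]
    exact forall_congr' fun z => by rw [not_imp_comm, not_le]
  rw [this]
  exact isClosed_biInter fun z _ =>
    isClosed_le continuous_const (hφ.comp (continuous_const.sub continuous_id))

lemma convex_plaquette (hφ : IsNorm φ) (hE : Convex ℝ E) (hr : r ≠ 0) :
    Convex ℝ (plaquette φ E r) := by
  rw [plaquette_eq_add hr, hφ.wulffBall_eq_ball]
  exact hE.wulffCenters.add (hφ.toSeminorm.convex_ball 0 r)

lemma exists_wulffCenter_of_mem_closure_plaquette (hφ : IsNorm φ) (hr : r ≠ 0)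
    {x : Fin n → ℝ} (hx : x ∈ closure (plaquette φ E r)) :
    ∃ y ∈ wulffCenters φ E r, φ (x - y) ≤ r := by
  have hsub : plaquette φ E r ⊆ wulffCenters φ E r + {v | φ v ≤ r} := by
    rw [plaquette_eq_add hr]
    exact add_subset_add_left fun v (hv : φ (v - 0) < r) => by simpa using hv.le
  obtain ⟨y, hy, v, hv, rfl⟩ := closure_minimal hsub
    ((isClosed_wulffCenters hφ.continuous).add_right_of_isCompact (hφ.isCompact_setOf_le r)) hx
  exact ⟨y, hy, by rwa [add_sub_cancel_left]⟩

lemma rWCond_plaquette (hφ : IsNorm φ) (hr : 0 < r) : rWCond φ (plaquette φ E r) r := by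
  intro x hx
  obtain ⟨y, hy, hxy⟩ := exists_wulffCenter_of_mem_closure_plaquette hφ hr.ne' hx.1
  have hball := wulffBall_subset_plaquette hr.ne' hy
  have hxy_eq : φ (x - y) = r := hxy.eq_of_not_lt fun hlt =>
    hx.2 (interior_maximal hball (hφ.isOpen_wulffBall y r) hlt)
  exact ⟨y, hball, hφ.toSeminorm.mem_frontier_ball hr hxy_eq⟩

/-- For a convex set `E ⊆ ℝ²` and `r > 0`, the Wulff plaquette `E^r`
is convex and satisfies the `rW_φ`-condition. -/
theorem plaquette_convex_and_rWCond (φ : (Fin 2 → ℝ) → ℝ) (hφ : IsNorm φ)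
    (E : Set (Fin 2 → ℝ)) (hEconv : Convex ℝ E) (r : ℝ) (hr : 0 < r) :
    Convex ℝ (plaquette φ E r) ∧ rWCond φ (plaquette φ E r) r :=
  ⟨convex_plaquette hφ hEconv hr.ne', rWCond_plaquette hφ hr⟩

end
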